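/- arXiv:2401.08532 — 4 statements merged into one kernel-verified Lean document; each statement's English description precedes it below -/
import Mathlib

section
/- Let ν : F* → Γ be a valuation on a field F. Then the assignment (a₁,…,a_d) ↦ ν(a₁) ∧ … ∧ ν(a_d) defines a well-defined homomorphism of graded rings from the Milnor K-theory ring K(F) to the exterior algebra ⋀Γ. -/
open ExteriorAlgebra

/-- The Steinberg relation on the tensor algebra of `Fˣ` (written additively):
`{a} ⬝ {b} = 0` whenever `a + b = 1` in `F`. Milnor K-theory `K(F)` is the quotient of
the tensor algebra of `Additive Fˣ` by this relation. -/
inductive MilnorRel (F : Type*) [Field F] :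
    TensorAlgebra ℤ (Additive Fˣ) → TensorAlgebra ℤ (Additive Fˣ) → Prop
  | steinberg (a b : Fˣ) (h : (a : F) + (b : F) = 1) :
      MilnorRel F
        (TensorAlgebra.ι ℤ (Additive.ofMul a) * TensorAlgebra.ι ℤ (Additive.ofMul b)) 0

/-- Milnor K-theory of a field `F`, as a ring. -/
def MilnorK (F : Type*) [Field F] : Type _ := RingQuot (MilnorRel F)

noncomputable instance (F : Type*) [Field F] : Ring (MilnorK F) :=
  inferInstanceAs (Ring (RingQuot (MilnorRel F)))

/-- The symbol `{a} ∈ K₁(F)` for `a ∈ Fˣ`. -/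
noncomputable def MilnorK.symbol {F : Type*} [Field F] (a : Fˣ) : MilnorK F :=
  RingQuot.mkRingHom (MilnorRel F) (TensorAlgebra.ι ℤ (Additive.ofMul a))

/-!
The symbol map extends from the tensor algebra on `Fˣ` as soon as the Steinberg relation
`ν a ∧ ν (1 - a) = 0` holds in `⋀Γ`. This follows from the ultrametric inequality: if
`ν a > 0` then `ν (1 - a) = 0`, if `ν a < 0` then `ν (1 - a) = ν a`, and otherwise `ν a = 0`;
in each case the wedge vanishes because `ι x ∧ ι x = 0`.
-/

namespace MilnorK

variable {F : Type*} [Field F]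

theorem tensorAlgebraLift_respects {A : Type*} [Ring A] (f : Additive Fˣ →+ A)
    (hf : ∀ a b : Fˣ, (a : F) + b = 1 → f (.ofMul a) * f (.ofMul b) = 0) ⦃x y⦄
    (hxy : MilnorRel F x y) :
    TensorAlgebra.lift ℤ f.toIntLinearMap x = TensorAlgebra.lift ℤ f.toIntLinearMap y := by
  obtain ⟨a, b, h⟩ := hxy
  simpa [TensorAlgebra.lift_ι_apply] using hf a b h

noncomputable def lift {A : Type*} [Ring A] (f : Additive Fˣ →+ A)
    (hf : ∀ a b : Fˣ, (a : F) + b = 1 → f (.ofMul a) * f (.ofMul b) = 0) : MilnorK F →+* A :=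
  RingQuot.lift ⟨(TensorAlgebra.lift ℤ f.toIntLinearMap).toRingHom, tensorAlgebraLift_respects f hf⟩

theorem lift_symbol {A : Type*} [Ring A] (f : Additive Fˣ →+ A)
    (hf : ∀ a b : Fˣ, (a : F) + b = 1 → f (.ofMul a) * f (.ofMul b) = 0) (a : Fˣ) :
    lift f hf (symbol a) = f (.ofMul a) :=
  (RingQuot.lift_mkRingHom_apply _ _ _).trans (TensorAlgebra.lift_ι_apply _ _)

end MilnorK

theorem eq_zero_or_eq_zero_or_eq_of_min_le {Γ : Type*} [Zero Γ] [LinearOrder Γ] {x y : Γ}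
    (hxy : min x y ≤ 0) (hx : min 0 y ≤ x) (hy : min 0 x ≤ y) : x = 0 ∨ y = 0 ∨ x = y := by
  grind

section Valuation

variable {G Γ : Type*} [Monoid G] [AddCommGroup Γ] [LinearOrder Γ] [IsOrderedAddMonoid Γ]
  {ν : G → Γ}

theorem val_one (hmul : ∀ x y, ν (x * y) = ν x + ν y) : ν 1 = 0 := by
  simpa using hmul 1 1

theorem val_eq_zero_of_mul_self_eq_one (hmul : ∀ x y, ν (x * y) = ν x + ν y) {g : G}
    (hg : g * g = 1) : ν g = 0 := by
  have h := hmul g g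
  rw [hg, val_one hmul] at h
  grind

end Valuation

section FieldValuation

variable {F Γ : Type*} [Field F] [AddCommGroup Γ] [LinearOrder Γ] [IsOrderedAddMonoid Γ]
  {ν : Fˣ → Γ}

theorem val_neg (hmul : ∀ x y, ν (x * y) = ν x + ν y) (x : Fˣ) : ν (-x) = ν x := by
  rw [← neg_one_mul, hmul, val_eq_zero_of_mul_self_eq_one hmul (by simp), zero_add]

theorem val_eq_zero_or_eq_zero_or_eq_of_add_eq_one (hmul : ∀ x y, ν (x * y) = ν x + ν y)
    (hadd : ∀ x y z : Fˣ, (x : F) + y = z → min (ν x) (ν y) ≤ ν z) {a b : Fˣ}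
    (hab : (a : F) + b = 1) : ν a = 0 ∨ ν b = 0 ∨ ν a = ν b := by
  refine eq_zero_or_eq_zero_or_eq_of_min_le ?_ ?_ ?_
  · simpa [val_one hmul] using hadd a b 1 (by simpa using hab)
  · simpa [val_one hmul, val_neg hmul] using hadd 1 (-b) a (by simp [← hab])
  · simpa [val_one hmul, val_neg hmul] using hadd 1 (-a) b (by simp [← hab])

end FieldValuation

/-- Let `ν : Fˣ → Γ` be a valuation on a field `F`. Then
`(a₁,…,a_d) ↦ ν(a₁) ∧ … ∧ ν(a_d)` defines a well-defined ring homomorphism from the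
Milnor K-theory ring `K(F)` to the exterior algebra `⋀Γ`; equivalently, there is a ring
homomorphism `K(F) →+* ⋀Γ` sending each symbol `{a}` to `ι (ν a)` (it then automatically
sends products of symbols to wedges and is graded). -/
theorem stmt_2 {F Γ : Type*} [Field F] [AddCommGroup Γ] [LinearOrder Γ] [IsOrderedAddMonoid Γ]
    (ν : Fˣ → Γ)
    (hmul : ∀ x y : Fˣ, ν (x * y) = ν x + ν y)
    (hadd : ∀ x y z : Fˣ, (x : F) + (y : F) = (z : F) → min (ν x) (ν y) ≤ ν z) :
    ∃ φ : MilnorK F →+* ExteriorAlgebra ℤ Γ,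
      ∀ a : Fˣ, φ (MilnorK.symbol a) = ExteriorAlgebra.ι ℤ (ν a) := by
  let νhom : Additive Fˣ →+ Γ := AddMonoidHom.mk' (fun a => ν a.toMul) fun _ _ => hmul _ _
  have steinberg (a b : Fˣ) (hab : (a : F) + b = 1) : ι ℤ (ν a) * ι ℤ (ν b) = 0 := by
    rcases val_eq_zero_or_eq_zero_or_eq_of_add_eq_one hmul hadd hab with h | h | h <;>
      simp [h]
  exact ⟨MilnorK.lift ((ι ℤ).toAddMonoidHom.comp νhom) steinberg,
    MilnorK.lift_symbol _ steinberg⟩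
end

section
/- Let Γ ⊆ Γ' be finitely generated free abelian groups of the same rank with index [Γ' : Γ] prime to p. Then the inclusion ⋀Γ ⊆ ⋀Γ' has index prime to p, and consequently induces an isomorphism (⋀Γ) ⊗ ℚ_p/ℤ_p ≅ (⋀Γ') ⊗ ℚ_p/ℤ_p. -/
open TensorProduct

/-- The subgroup `ℤ_p ⊆ ℚ_p`, as a `ℤ`-submodule. -/
noncomputable def ZpInQp (p : ℕ) [Fact p.Prime] : Submodule ℤ ℚ_[p] :=
  Submodule.span ℤ (Set.range ((↑) : ℤ_[p] → ℚ_[p]))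

/-- The Prüfer-type group `ℚ_p/ℤ_p`, as a `ℤ`-module. -/
noncomputable abbrev QpZp (p : ℕ) [Fact p.Prime] : Type := ℚ_[p] ⧸ ZpInQp p

/-!
Multiplication by `n = [Γ' : Γ]` maps `Γ'` into `Γ`, so both the kernel and the cokernel of
`⋀Γ → ⋀Γ'` are killed by powers of `n`: the cokernel because `⋀Γ'` is generated by `Γ'`, the
kernel because the composite `⋀Γ → ⋀Γ' → ⋀Γ` is multiplication by `n ^ i` in degree `i`. The
cokernel is then a finitely generated torsion group with no `p`-torsion, hence finite of order
prime to `p`. Integers prime to `p` are `p`-adic units, so they act bijectively on `ℚ_p/ℤ_p`,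
and tensoring with `ℚ_p/ℤ_p` kills kernel and cokernel.
-/

theorem mem_ZpInQp_iff {p : ℕ} [Fact p.Prime] {x : ℚ_[p]} : x ∈ ZpInQp p ↔ ‖x‖ ≤ 1 := by
  refine ⟨fun hx ↦ ?_, fun hx ↦ Submodule.subset_span ⟨⟨x, hx⟩, rfl⟩⟩
  have hle : ZpInQp p ≤ (PadicInt.subring p).toAddSubgroup.toIntSubmodule :=
    Submodule.span_le.mpr (by rintro _ ⟨y, rfl⟩; exact y.2)
  exact hle hx

theorem bijective_zsmul_QpZp {p : ℕ} [Fact p.Prime] {n : ℕ} (hn : ¬ p ∣ n) :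
    Function.Bijective ((n : ℤ) • · : QpZp p → QpZp p) := by
  have hnorm : ‖(n : ℚ_[p])‖ = 1 :=
    Padic.norm_natCast_eq_one_iff.mpr ((Nat.Prime.coprime_iff_not_dvd Fact.out).mpr hn)
  have hn0 : (n : ℚ_[p]) ≠ 0 := by rintro h; simp [h] at hnorm
  refine ⟨(injective_iff_map_eq_zero (DistribSMul.toAddMonoidHom _ (n : ℤ))).mpr ?_, ?_⟩
  · intro t ht
    induction t using Submodule.Quotient.induction_on with | H x => ?_
    rw [DistribSMul.toAddMonoidHom_apply, ← Submodule.Quotient.mk_smul,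
      Submodule.Quotient.mk_eq_zero, mem_ZpInQp_iff] at ht
    rw [Submodule.Quotient.mk_eq_zero, mem_ZpInQp_iff]
    rwa [zsmul_eq_mul, Int.cast_natCast, norm_mul, hnorm, one_mul] at ht
  · intro t
    induction t using Submodule.Quotient.induction_on with | H x => ?_
    refine ⟨Submodule.Quotient.mk ((n : ℚ_[p])⁻¹ * x), ?_⟩
    change (n : ℤ) • Submodule.Quotient.mk _ = _
    rw [← Submodule.Quotient.mk_smul, zsmul_eq_mul, Int.cast_natCast, mul_inv_cancel_left₀ hn0]

section TensorProduct

open Function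

variable {R M M' N : Type*} [CommRing R] [AddCommGroup M] [Module R M] [AddCommGroup M']
  [Module R M'] [AddCommGroup N] [Module R N]

theorem TensorProduct.bijective_smul {r : R} (hr : Bijective (r • · : N → N)) :
    Bijective (r • · : M ⊗[R] N → M ⊗[R] N) := by
  have h := ((LinearEquiv.ofBijective (DistribSMul.toLinearMap R N r) hr).lTensor M).bijective
  rwa [← LinearEquiv.coe_toLinearMap, LinearEquiv.coe_lTensor,
    show ((LinearEquiv.ofBijective _ hr : N ≃ₗ[R] N) : N →ₗ[R] N) =
      DistribSMul.toLinearMap R N r from rfl, LinearMap.lTensor_smul_action] at h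

theorem TensorProduct.tmul_eq_zero_of_smul_eq_zero {r : R} (hr : Surjective (r • · : N → N))
    {x : M} (hx : r • x = 0) (t : N) : x ⊗ₜ[R] t = 0 := by
  obtain ⟨t, rfl⟩ := hr t
  rw [← smul_tmul, hx, zero_tmul]

theorem Submodule.bijective_rTensor_subtype {S : Submodule R M'} {r : R}
    (hr : Bijective (r • · : N → N)) (hS : ∀ y, r • y ∈ S) :
    Bijective (S.subtype.rTensor N) := by
  let j : M' →ₗ[R] S := (DistribSMul.toLinearMap R M' r).codRestrict S hS
  have hij : S.subtype ∘ₗ j = DistribSMul.toLinearMap R M' r :=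
    LinearMap.subtype_comp_codRestrict _ _ _
  have hji : j ∘ₗ S.subtype = DistribSMul.toLinearMap R S r := by ext; rfl
  have hM' : Bijective (DistribSMul.toLinearMap R (M' ⊗[R] N) r) := bijective_smul hr
  have hS' : Bijective (DistribSMul.toLinearMap R (S ⊗[R] N) r) := bijective_smul hr
  rw [← LinearMap.rTensor_smul_action, ← hij, LinearMap.rTensor_comp, LinearMap.coe_comp] at hM'
  rw [← LinearMap.rTensor_smul_action, ← hji, LinearMap.rTensor_comp, LinearMap.coe_comp] at hS'
  exact ⟨.of_comp hS'.1, .of_comp hM'.2⟩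

theorem LinearMap.injective_rTensor_of_surjective {f : M →ₗ[R] M'} (hf : Surjective f)
    (hker : ∀ x, f x = 0 → ∀ t : N, x ⊗ₜ[R] t = 0) : Injective (f.rTensor N) := by
  have hzero : (LinearMap.ker f).subtype.rTensor N = 0 :=
    TensorProduct.ext' fun x t ↦ hker x x.2 t
  rw [← LinearMap.ker_eq_bot, (rTensor_exact N (exact_subtype_ker_map f) hf).linearMap_ker_eq,
    hzero, LinearMap.range_zero]

theorem LinearMap.bijective_rTensor_of_smul_mem_range {f : M →ₗ[R] M'}
    (hker : ∀ x, f x = 0 → ∃ s : R, Surjective (s • · : N → N) ∧ s • x = 0)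
    {r : R} (hr : Bijective (r • · : N → N)) (hrange : ∀ y, r • y ∈ LinearMap.range f) :
    Bijective (f.rTensor N) := by
  have hinj : Injective (f.rangeRestrict.rTensor N) := by
    refine f.rangeRestrict.injective_rTensor_of_surjective f.surjective_rangeRestrict ?_
    intro x hx t
    obtain ⟨s, hs, hsx⟩ := hker x (congrArg Subtype.val hx)
    exact tmul_eq_zero_of_smul_eq_zero hs hsx t
  have hsurj := LinearMap.rTensor_surjective N f.surjective_rangeRestrict
  have hsub := (LinearMap.range f).bijective_rTensor_subtype hr hrange
  rw [← LinearMap.subtype_comp_codRestrict f (LinearMap.range f) (LinearMap.mem_range_self f),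
    LinearMap.rTensor_comp, LinearMap.coe_comp]
  exact ⟨hsub.1.comp hinj, hsub.2.comp hsurj⟩

end TensorProduct

theorem Submodule.not_dvd_index_of_forall_exists_pow_smul_mem {G : Type*} [AddCommGroup G]
    [Module.Finite ℤ G] (S : Submodule ℤ G) {p n : ℕ} [Fact p.Prime] (hpn : ¬ p ∣ n)
    (h : ∀ g, ∃ k : ℕ, (n : ℤ) ^ k • g ∈ S) : ¬ p ∣ S.toAddSubgroup.index := by
  have hn : n ≠ 0 := by rintro rfl; exact hpn (dvd_zero p)
  have htors : ∀ q : G ⧸ S, ∃ k : ℕ, (n : ℤ) ^ k • q = 0 := by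
    intro q
    induction q using Submodule.Quotient.induction_on with | H g => ?_
    obtain ⟨k, hk⟩ := h g
    exact ⟨k, by rwa [← Submodule.Quotient.mk_smul, Submodule.Quotient.mk_eq_zero]⟩
  have : Finite (G ⧸ S) := Module.finite_of_fg_torsion _ fun q ↦ by
    obtain ⟨k, hk⟩ := htors q
    exact ⟨⟨(n : ℤ) ^ k, pow_mem (mem_nonZeroDivisors_of_ne_zero (by exact_mod_cast hn)) k⟩, hk⟩
  intro hp
  obtain ⟨q, hq⟩ := exists_prime_addOrderOf_dvd_card' (G := G ⧸ S) p hp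
  obtain ⟨k, hk⟩ := htors q
  have hdvd : p ∣ n ^ k := by
    rw [← hq]
    exact addOrderOf_dvd_of_nsmul_eq_zero (by rwa [← Nat.cast_pow, natCast_zsmul] at hk)
  exact hpn ((Fact.out : p.Prime).dvd_of_dvd_pow hdvd)

namespace ExteriorAlgebra

variable {R M : Type*} [CommRing R] [AddCommGroup M] [Module R M]

instance [Module.Finite R M] : Module.Finite R (ExteriorAlgebra R M) := by
  obtain ⟨n, π, hπ⟩ := Module.Finite.exists_fin' R M
  have : Module.Finite R (ExteriorAlgebra R (Fin n → R)) :=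
    Module.Finite.of_basis (Pi.basisFun R (Fin n)).ExteriorAlgebra
  exact Module.Finite.of_surjective (map π).toLinearMap (map_surjective_iff.mpr hπ)

theorem map_lsmul_of_mem_exteriorPower (c : R) {i : ℕ} {x : ExteriorAlgebra R M}
    (hx : x ∈ ⋀[R]^i M) : map (LinearMap.lsmul R M c) x = c ^ i • x := by
  induction hx using Submodule.pow_induction_on_left' with
  | algebraMap r => rw [AlgHom.commutes, pow_zero, one_smul]
  | add x y n _ _ hx hy => rw [map_add, hx, hy, smul_add]
  | mem_mul m hm n y _ hy =>
    obtain ⟨v, rfl⟩ := hm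
    rw [map_mul, hy, map_apply_ι, LinearMap.lsmul_apply, map_smul, smul_mul_smul_comm,
      ← pow_succ']

theorem decompose_map_lsmul (c : R) (x : ExteriorAlgebra R M) (i : ℕ) :
    (DirectSum.decompose (fun n ↦ ⋀[R]^n M) (map (LinearMap.lsmul R M c) x) i :
      ExteriorAlgebra R M) = c ^ i • (DirectSum.decompose (fun n ↦ ⋀[R]^n M) x i) := by
  induction x using DirectSum.Decomposition.inductionOn (fun n ↦ ⋀[R]^n M) with
  | zero => simp
  | @homogeneous j x =>
    have hcx : c ^ j • (x : ExteriorAlgebra R M) ∈ ⋀[R]^j M := Submodule.smul_mem _ _ x.2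
    rw [map_lsmul_of_mem_exteriorPower c x.2]
    obtain rfl | hij := eq_or_ne j i
    · rw [DirectSum.decompose_of_mem_same (fun n ↦ ⋀[R]^n M) hcx,
        DirectSum.decompose_of_mem_same (fun n ↦ ⋀[R]^n M) x.2]
    · rw [DirectSum.decompose_of_mem_ne (fun n ↦ ⋀[R]^n M) hcx hij,
        DirectSum.decompose_of_mem_ne (fun n ↦ ⋀[R]^n M) x.2 hij, smul_zero]
  | add x y hx hy =>
    simp only [map_add, DirectSum.decompose_add, DirectSum.add_apply, Submodule.coe_add, hx, hy,
      smul_add]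

theorem exists_pow_smul_eq_zero_of_map_lsmul_eq_zero (c : R) {x : ExteriorAlgebra R M}
    (hx : map (LinearMap.lsmul R M c) x = 0) : ∃ k : ℕ, c ^ k • x = 0 := by
  classical
  let s := (DirectSum.decompose (fun n ↦ ⋀[R]^n M) x).support
  refine ⟨s.sup id, ?_⟩
  rw [← DirectSum.sum_support_decompose (fun n ↦ ⋀[R]^n M) x, Finset.smul_sum]
  refine Finset.sum_eq_zero fun i hi ↦ ?_
  have hci : c ^ i • (DirectSum.decompose (fun n ↦ ⋀[R]^n M) x i : ExteriorAlgebra R M) = 0 := by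
    rw [← decompose_map_lsmul, hx, DirectSum.decompose_zero, DirectSum.zero_apply,
      ZeroMemClass.coe_zero]
  have hle : i ≤ s.sup id := Finset.le_sup (f := id) hi
  rw [← Nat.sub_add_cancel hle, pow_add, mul_smul, hci, smul_zero]

theorem exists_pow_smul_mem_range_map_subtype {P : Submodule R M} {c : R}
    (hc : ∀ y, c • y ∈ P) (x : ExteriorAlgebra R M) :
    ∃ k : ℕ, c ^ k • x ∈ (map P.subtype).range := by
  induction x using ExteriorAlgebra.induction with
  | algebraMap r => exact ⟨0, by rw [pow_zero, one_smul]; exact Subalgebra.algebraMap_mem _ r⟩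
  | ι y =>
    refine ⟨1, ι R (⟨c • y, hc y⟩ : P), ?_⟩
    rw [AlgHom.toRingHom_eq_coe, RingHom.coe_coe, map_apply_ι, pow_one, ← map_smul]
    rfl
  | mul x y hx hy =>
    obtain ⟨k, hk⟩ := hx
    obtain ⟨l, hl⟩ := hy
    exact ⟨k + l, by rw [pow_add, ← smul_mul_smul_comm]; exact mul_mem hk hl⟩
  | add x y hx hy =>
    obtain ⟨k, hk⟩ := hx
    obtain ⟨l, hl⟩ := hy
    refine ⟨k + l, ?_⟩
    have hsplit : c ^ (k + l) • (x + y) = c ^ l • (c ^ k • x) + c ^ k • (c ^ l • y) := by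
      rw [smul_add, smul_smul, smul_smul, ← pow_add, ← pow_add, add_comm l]
    rw [hsplit]
    exact add_mem (Subalgebra.smul_mem _ hk _) (Subalgebra.smul_mem _ hl _)

theorem exists_pow_smul_eq_zero_of_map_subtype_eq_zero {P : Submodule R M} {c : R}
    (hc : ∀ y, c • y ∈ P) {x : ExteriorAlgebra R P} (hx : map P.subtype x = 0) :
    ∃ k : ℕ, c ^ k • x = 0 := by
  refine exists_pow_smul_eq_zero_of_map_lsmul_eq_zero c ?_
  have hcomp : (LinearMap.lsmul R M c).codRestrict P hc ∘ₗ P.subtype =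
      LinearMap.lsmul R P c := by
    ext; rfl
  rw [← hcomp, ← map_comp_map, AlgHom.comp_apply, hx, map_zero]

end ExteriorAlgebra

theorem stmt_3_general (p : ℕ) [Fact p.Prime] {Γ' : Type*} [AddCommGroup Γ']
    [Module.Finite ℤ Γ'] (Γ : Submodule ℤ Γ')
    (hindex : ¬ (p : ℕ) ∣ Γ.toAddSubgroup.index) :
    (¬ (p : ℕ) ∣ (Subalgebra.toSubmodule
        (ExteriorAlgebra.map Γ.subtype).range).toAddSubgroup.index) ∧
    Function.Bijective
      (LinearMap.rTensor (QpZp p) (ExteriorAlgebra.map Γ.subtype).toLinearMap :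
        ExteriorAlgebra ℤ Γ ⊗[ℤ] QpZp p → ExteriorAlgebra ℤ Γ' ⊗[ℤ] QpZp p) := by
  set n := Γ.toAddSubgroup.index
  have hΓ : ∀ y : Γ', (n : ℤ) • y ∈ Γ := fun y ↦ by
    rw [natCast_zsmul]; exact Γ.toAddSubgroup.nsmul_index_mem y
  set S := Subalgebra.toSubmodule (ExteriorAlgebra.map Γ.subtype).range
  have hS : ¬ p ∣ S.toAddSubgroup.index := S.not_dvd_index_of_forall_exists_pow_smul_mem hindex
    (ExteriorAlgebra.exists_pow_smul_mem_range_map_subtype hΓ)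
  refine ⟨hS, LinearMap.bijective_rTensor_of_smul_mem_range ?_ (bijective_zsmul_QpZp hS) ?_⟩
  · intro x hx
    obtain ⟨k, hk⟩ := ExteriorAlgebra.exists_pow_smul_eq_zero_of_map_subtype_eq_zero hΓ hx
    have hnk : ¬ p ∣ n ^ k := fun h ↦ hindex ((Fact.out : p.Prime).dvd_of_dvd_pow h)
    exact ⟨_, (bijective_zsmul_QpZp hnk).2, by rwa [Nat.cast_pow]⟩
  · intro y
    rw [natCast_zsmul]
    exact S.toAddSubgroup.nsmul_index_mem y

/-- Let `Γ ⊆ Γ'` be finitely generated free abelian groups of the same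
rank with index `[Γ' : Γ]` prime to `p`. Then the inclusion `⋀Γ ⊆ ⋀Γ'` (induced on
exterior algebras over `ℤ`) has index prime to `p`, and consequently induces an
isomorphism `(⋀Γ) ⊗ ℚ_p/ℤ_p ≅ (⋀Γ') ⊗ ℚ_p/ℤ_p`. -/
theorem stmt_3 (p : ℕ) [Fact p.Prime] {Γ' : Type*} [AddCommGroup Γ']
    [Module.Free ℤ Γ'] [Module.Finite ℤ Γ'] (Γ : Submodule ℤ Γ')
    (hrank : Module.finrank ℤ Γ = Module.finrank ℤ Γ')
    (hindex : ¬ (p : ℕ) ∣ Γ.toAddSubgroup.index) :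
    (¬ (p : ℕ) ∣ (Subalgebra.toSubmodule
        (ExteriorAlgebra.map Γ.subtype).range).toAddSubgroup.index) ∧
    Function.Bijective
      (LinearMap.rTensor (QpZp p) (ExteriorAlgebra.map Γ.subtype).toLinearMap :
        ExteriorAlgebra ℤ Γ ⊗[ℤ] QpZp p → ExteriorAlgebra ℤ Γ' ⊗[ℤ] QpZp p) :=
  stmt_3_general p Γ hindex
end

section
/- Let Γ ⊆ Γ' be finitely generated free abelian groups with [Γ' : Γ] finite and prime to p. Then for every n ≥ 1 the induced map (⋀Γ)/pⁿ → (⋀Γ')/pⁿ is an isomorphism. -/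
/-!
Let `m = [Γ' : Γ]` and `u m ≡ 1 (mod pⁿ)`. Multiplication by `c = u m` maps `Γ'` into `Γ`, and
composed with the inclusion in either order it is `c • id`. Applying `⋀` gives composites
`⋀(c • id)`, which agrees with the identity modulo `c - 1`, hence modulo `pⁿ`: linear maps that are
congruent modulo `r` induce algebra maps that are congruent modulo `r`.
-/

open TensorProduct

namespace ExteriorAlgebra

variable {R M N : Type*} [CommRing R] [AddCommGroup M] [Module R M] [AddCommGroup N] [Module R N]

theorem exists_map_sub_map_eq_smul (r : R) {f g : M →ₗ[R] N} (hfg : ∀ v, ∃ w, f v - g v = r • w)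
    (x : ExteriorAlgebra R M) : ∃ y, map f x - map g x = r • y := by
  induction x using ExteriorAlgebra.induction with
  | algebraMap s => exact ⟨0, by simp⟩
  | ι v =>
    obtain ⟨w, hw⟩ := hfg v
    exact ⟨ι R w, by rw [map_apply_ι, map_apply_ι, ← map_sub, hw, map_smul]⟩
  | mul a b ha hb =>
    obtain ⟨y₁, hy₁⟩ := ha
    obtain ⟨y₂, hy₂⟩ := hb
    refine ⟨y₁ * map f b + map g a * y₂, ?_⟩
    calc map f (a * b) - map g (a * b)
        = (map f a - map g a) * map f b + map g a * (map f b - map g b) := by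
          simp only [map_mul, sub_mul, mul_sub]; abel
      _ = r • (y₁ * map f b + map g a * y₂) := by
          rw [hy₁, hy₂, smul_mul_assoc, mul_smul_comm, smul_add]
  | add a b ha hb =>
    obtain ⟨y₁, hy₁⟩ := ha
    obtain ⟨y₂, hy₂⟩ := hb
    exact ⟨y₁ + y₂, by rw [map_add, map_add, add_sub_add_comm, hy₁, hy₂, smul_add]⟩

variable {Q : Type*} [AddCommGroup Q] [Module R Q]

theorem rTensor_map_eq_of_sub_eq_smul (r : R) (hQ : ∀ q : Q, r • q = 0) {f g : M →ₗ[R] N}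
    (hfg : ∀ v, ∃ w, f v - g v = r • w) :
    (map f).toLinearMap.rTensor Q = (map g).toLinearMap.rTensor Q := by
  refine TensorProduct.ext' fun x q => ?_
  obtain ⟨y, hy⟩ := exists_map_sub_map_eq_smul r hfg x
  rw [LinearMap.rTensor_tmul, LinearMap.rTensor_tmul, AlgHom.toLinearMap_apply,
    AlgHom.toLinearMap_apply, eq_add_of_sub_eq' hy, add_tmul, smul_tmul, hQ, tmul_zero, add_zero]

theorem rTensor_map_smul_id (c : R) (hQ : ∀ q : Q, c • q = q) :
    (map (c • LinearMap.id : M →ₗ[R] M)).toLinearMap.rTensor Q = LinearMap.id := by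
  have hc : ∀ q : Q, (c - 1) • q = 0 := fun q => by rw [sub_smul, one_smul, hQ, sub_self]
  rw [rTensor_map_eq_of_sub_eq_smul (c - 1) hc (g := LinearMap.id) fun v => ⟨v, by simp [sub_smul]⟩,
    map_id, AlgHom.toLinearMap_id, LinearMap.rTensor_id]

theorem rTensor_map_comp_eq_id {f : M →ₗ[R] N} {g : N →ₗ[R] M} (c : R) (hQ : ∀ q : Q, c • q = q)
    (hgf : g ∘ₗ f = c • LinearMap.id) :
    (map g).toLinearMap.rTensor Q ∘ₗ (map f).toLinearMap.rTensor Q = LinearMap.id := by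
  rw [← LinearMap.rTensor_comp, ← AlgHom.comp_toLinearMap, map_comp_map, hgf,
    rTensor_map_smul_id c hQ]

theorem bijective_rTensor_map_of_comp_eq_smul {f : M →ₗ[R] N} {g : N →ₗ[R] M} (c : R)
    (hQ : ∀ q : Q, c • q = q) (hgf : g ∘ₗ f = c • LinearMap.id) (hfg : f ∘ₗ g = c • LinearMap.id) :
    Function.Bijective ((map f).toLinearMap.rTensor Q) :=
  Function.bijective_iff_has_inverse.2 ⟨(map g).toLinearMap.rTensor Q,
    LinearMap.congr_fun (rTensor_map_comp_eq_id c hQ hgf),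
    LinearMap.congr_fun (rTensor_map_comp_eq_id c hQ hfg)⟩

end ExteriorAlgebra

namespace Submodule

variable {M : Type*} [AddCommGroup M] (Γ : Submodule ℤ M)

noncomputable def indexSMul : M →ₗ[ℤ] Γ :=
  LinearMap.codRestrict Γ ((Γ.toAddSubgroup.index : ℤ) • LinearMap.id) fun x => by
    simpa using Γ.toAddSubgroup.nsmul_index_mem x

theorem subtype_comp_indexSMul :
    Γ.subtype ∘ₗ Γ.indexSMul = (Γ.toAddSubgroup.index : ℤ) • LinearMap.id :=
  rfl

theorem indexSMul_comp_subtype :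
    Γ.indexSMul ∘ₗ Γ.subtype = (Γ.toAddSubgroup.index : ℤ) • LinearMap.id :=
  LinearMap.ext fun _ => Subtype.ext rfl

end Submodule

theorem stmt_4_general (p : ℕ) (hp : p.Prime) {Γ' : Type*} [AddCommGroup Γ']
    (Γ : Submodule ℤ Γ')
    (hindex : ¬ (p : ℕ) ∣ Γ.toAddSubgroup.index) :
    ∀ n : ℕ, 1 ≤ n →
      Function.Bijective
        (LinearMap.rTensor (ZMod (p ^ n)) (ExteriorAlgebra.map Γ.subtype).toLinearMap :
          ExteriorAlgebra ℤ Γ ⊗[ℤ] ZMod (p ^ n) → ExteriorAlgebra ℤ Γ' ⊗[ℤ] ZMod (p ^ n)) := by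
  intro n _
  set m := Γ.toAddSubgroup.index
  obtain ⟨a, u, hau⟩ := Nat.isCoprime_iff_coprime.2 ((hp.coprime_iff_not_dvd.2 hindex).pow_left n)
  have hum : ((u * m : ℤ) : ZMod (p ^ n)) = 1 := by
    have h := congrArg (Int.cast : ℤ → ZMod (p ^ n)) hau
    push_cast at h ⊢
    rwa [← Nat.cast_pow, ZMod.natCast_self, mul_zero, zero_add] at h
  refine ExteriorAlgebra.bijective_rTensor_map_of_comp_eq_smul (g := u • Γ.indexSMul) (u * m)
    (fun q => by rw [zsmul_eq_mul, hum, one_mul]) ?_ ?_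
  · rw [LinearMap.smul_comp, Γ.indexSMul_comp_subtype, smul_smul]
  · rw [LinearMap.comp_smul, Γ.subtype_comp_indexSMul, smul_smul]

/-- Let `Γ ⊆ Γ'` be finitely generated free abelian groups with
`[Γ' : Γ]` finite and prime to `p`. Then for every `n ≥ 1` the induced map
`(⋀Γ)/pⁿ → (⋀Γ')/pⁿ` is an isomorphism. (Here `A/pⁿ` is realized as `A ⊗ ℤ/pⁿ`.) -/
theorem stmt_4 (p : ℕ) (hp : p.Prime) {Γ' : Type*} [AddCommGroup Γ']
    [Module.Free ℤ Γ'] [Module.Finite ℤ Γ'] (Γ : Submodule ℤ Γ')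
    (hfin : Γ.toAddSubgroup.index ≠ 0)
    (hindex : ¬ (p : ℕ) ∣ Γ.toAddSubgroup.index) :
    ∀ n : ℕ, 1 ≤ n →
      Function.Bijective
        (LinearMap.rTensor (ZMod (p ^ n)) (ExteriorAlgebra.map Γ.subtype).toLinearMap :
          ExteriorAlgebra ℤ Γ ⊗[ℤ] ZMod (p ^ n) → ExteriorAlgebra ℤ Γ' ⊗[ℤ] ZMod (p ^ n)) :=
  stmt_4_general p hp Γ hindex
end

section
/- Let Γ = ℤ^r, ω ∈ ⋀²Γ ⊗ ℚ_p/ℤ_p corresponding to (1/p^N) M for a skew-symmetric integer matrix M, and suppose there is a basis e₁,…,e_r of a free abelian group Γ' ⊇ Γ with Γ spanned by d₁e₁,…,d_re_r where d_i = ±1 for all i > n, each d_i a power of p up to sign, and the image of ω in ⋀²Γ' ⊗ ℚ_p/ℤ_p is zero. Then ω lies in ⋀²W ⊗ ℚ_p/ℤ_p for some subgroup W ⊆ Γ of rank at most 2n. -/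
open TensorProduct

/-!
Write `ω = ∑_{i<j} (gᵢ ∧ gⱼ) ⊗ aᵢⱼ` in the basis `gᵢ = dᵢeᵢ` of `Γ`. Its image in
`⋀²Γ' ⊗ ℚ_p/ℤ_p` is `∑_{i<j} (eᵢ ∧ eⱼ) ⊗ dᵢdⱼaᵢⱼ`, and pairing with `e_k^* ∧ e_l^*` reads off
`d_k d_l a_kl = 0`; for `n ≤ k < l` the factor `d_k d_l = ±1` is a unit, so `a_kl = 0`.
As `ℚ_p/ℤ_p` is locally cyclic, all `aᵢⱼ = bᵢⱼ • t` for a single `t`, hence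
`ω = ∑_{i<n} (gᵢ ∧ fᵢ) ⊗ t` with `fᵢ = ∑_{j>i} bᵢⱼ gⱼ`, and `W = span {gᵢ, fᵢ | i < n}` works.
-/

open Finset

theorem Finset.sum_sum_eq_sum_sum_Ioi_add {ι A : Type*} [LinearOrder ι] [Fintype ι]
    [LocallyFiniteOrderTop ι] [AddCommMonoid A] (F : ι → ι → A) (hF : ∀ i, F i i = 0) :
    ∑ i, ∑ j, F i j = ∑ i, ∑ j ∈ Ioi i, (F i j + F j i) := by
  have hF' : ∀ i j, F i j = (if i < j then F i j else 0) + (if j < i then F i j else 0) := by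
    intro i j
    rcases lt_trichotomy i j with h | rfl | h
    · simp [h, h.not_gt]
    · simp [hF]
    · simp [h, h.not_gt]
  calc ∑ i, ∑ j, F i j
      = ∑ i, ∑ j, (if i < j then F i j else 0) + ∑ j, ∑ i, (if j < i then F i j else 0) := by
        simp_rw [sum_comm (γ := ι) (f := fun j i => if j < i then F i j else 0),
          ← sum_add_distrib, ← hF']
    _ = ∑ i, ∑ j ∈ Ioi i, (F i j + F j i) := by
        simp_rw [← sum_add_distrib, ← ite_add_zero, ← sum_filter, filter_lt_eq_Ioi]

theorem LinearIndependent.smul_of_ne_zero {ι R M : Type*} [Ring R] [NoZeroDivisors R]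
    [AddCommGroup M] [Module R M] {v : ι → M} (hv : LinearIndependent R v) {w : ι → R}
    (hw : ∀ i, w i ≠ 0) : LinearIndependent R fun i => w i • v i := by
  rw [linearIndependent_iff'] at hv ⊢
  intro s c hc i hi
  have := hv s (fun i => c i * w i) (by simpa [mul_smul] using hc) i hi
  exact (mul_eq_zero.mp this).resolve_right (hw i)

namespace ExteriorAlgebra

variable {R M N Q : Type*} [CommRing R] [AddCommGroup M] [Module R M] [AddCommGroup N] [Module R N]
  [AddCommGroup Q] [Module R Q]

/-- `φ ∧ ψ` as a functional on `⋀²M`, extended by zero to the other degrees. -/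
noncomputable def wedgePairing (φ ψ : Module.Dual R M) : ExteriorAlgebra R M →ₗ[R] R :=
  liftAlternating (Pi.single 2
    ((exteriorPower.pairingDual R M 2 (exteriorPower.ιMulti R 2 ![φ, ψ])).compAlternatingMap
      (exteriorPower.ιMulti R 2)))

theorem wedgePairing_ι_mul_ι (φ ψ : Module.Dual R M) (u v : M) :
    wedgePairing φ ψ (ι R u * ι R v) = φ u * ψ v - φ v * ψ u := by
  rw [wedgePairing, liftAlternating_ι_mul, liftAlternating_ι]
  simp [exteriorPower.pairingDual_ιMulti_ιMulti, Matrix.det_fin_two]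
  ring

section Basis

variable {I : Type*} [LinearOrder I] [Fintype I] [LocallyFiniteOrderTop I]

theorem ι_mul_ι_eq_sum_Ioi (g : Module.Basis I R M) (u v : M) :
    ι R u * ι R v = ∑ i, ∑ j ∈ Ioi i,
      (g.repr u i * g.repr v j - g.repr u j * g.repr v i) • (ι R (g i) * ι R (g j)) := by
  conv_lhs => rw [← g.sum_repr u, ← g.sum_repr v]
  simp_rw [map_sum, map_smul, sum_mul_sum, smul_mul_smul_comm]
  rw [sum_sum_eq_sum_sum_Ioi_add _ fun i => by rw [ι_sq_zero, smul_zero]]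
  refine sum_congr rfl fun i _ => sum_congr rfl fun j _ => ?_
  rw [sub_smul, eq_neg_of_add_eq_zero_left (ι_add_mul_swap (g j) (g i)), smul_neg,
    sub_eq_add_neg]

theorem exists_eq_sum_Ioi_of_mem_span (g : Module.Basis I R M) {x : ExteriorAlgebra R M ⊗[R] Q}
    (hx : x ∈ Submodule.span R {x | ∃ (u v : M) (c : Q), x = (ι R u * ι R v) ⊗ₜ[R] c}) :
    ∃ a : I → I → Q, x = ∑ i, ∑ j ∈ Ioi i, (ι R (g i) * ι R (g j)) ⊗ₜ[R] a i j := by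
  induction hx using Submodule.span_induction with
  | mem x hx =>
    obtain ⟨u, v, c, rfl⟩ := hx
    refine ⟨fun i j => (g.repr u i * g.repr v j - g.repr u j * g.repr v i) • c, ?_⟩
    simp_rw [ι_mul_ι_eq_sum_Ioi g u v, sum_tmul, smul_tmul]
  | zero => exact ⟨0, by simp⟩
  | add x y _ _ hx hy =>
    obtain ⟨a, rfl⟩ := hx
    obtain ⟨b, rfl⟩ := hy
    exact ⟨a + b, by simp [tmul_add, sum_add_distrib]⟩
  | smul c x _ hx =>
    obtain ⟨a, rfl⟩ := hx
    exact ⟨c • a, by simp [smul_sum, tmul_smul]⟩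

theorem lid_rTensor_wedgePairing_sum_Ioi (e : Module.Basis I R M) (a : I → I → Q) {k l : I}
    (hkl : k < l) :
    TensorProduct.lid R Q (LinearMap.rTensor Q (wedgePairing (e.coord k) (e.coord l))
      (∑ i, ∑ j ∈ Ioi i, (ι R (e i) * ι R (e j)) ⊗ₜ[R] a i j)) = a k l := by
  simp only [map_sum, LinearMap.rTensor_tmul, lid_tmul, wedgePairing_ι_mul_ι,
    Module.Basis.coord_apply, Module.Basis.repr_self, Finsupp.single_apply]
  rw [sum_eq_single k, sum_eq_single l]
  · simp [hkl.ne']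
  · intro j hj hjl
    simp [hjl, (mem_Ioi.mp hj).ne']
  · simp [hkl]
  · intro i _ hik
    refine sum_eq_zero fun j hj => ?_
    by_cases hil : i = l
    · subst hil
      simp [hik, (hkl.trans (mem_Ioi.mp hj)).ne']
    · simp [hik, hil]
  · simp

theorem rTensor_map_sum_Ioi_of_apply_eq_smul (f : M →ₗ[R] N) {g : I → M} {e : I → N} {d : I → R}
    (hg : ∀ i, f (g i) = d i • e i) (a : I → I → Q) :
    LinearMap.rTensor Q (map f).toLinearMap
        (∑ i, ∑ j ∈ Ioi i, (ι R (g i) * ι R (g j)) ⊗ₜ[R] a i j) =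
      ∑ i, ∑ j ∈ Ioi i, (ι R (e i) * ι R (e j)) ⊗ₜ[R] ((d i * d j) • a i j) := by
  simp only [map_sum, LinearMap.rTensor_tmul, AlgHom.toLinearMap_apply, map_mul, map_apply_ι, hg,
    LinearMap.map_smul, smul_mul_smul_comm, smul_tmul]

theorem smul_eq_zero_of_rTensor_map_sum_Ioi_eq_zero (f : M →ₗ[R] N) {g : I → M}
    (e : Module.Basis I R N) {d : I → R} (hg : ∀ i, f (g i) = d i • e i) {a : I → I → Q}
    (h : LinearMap.rTensor Q (map f).toLinearMap
      (∑ i, ∑ j ∈ Ioi i, (ι R (g i) * ι R (g j)) ⊗ₜ[R] a i j) = 0) {k l : I} (hkl : k < l) :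
    (d k * d l) • a k l = 0 := by
  rw [← lid_rTensor_wedgePairing_sum_Ioi e (fun i j => (d i * d j) • a i j) hkl,
    ← rTensor_map_sum_Ioi_of_apply_eq_smul f hg, h, map_zero, map_zero]

end Basis

section Span

variable {V : Type*} [AddCommGroup V] [Module R V] [StrongRankCondition R]

theorem exists_finrank_le_of_sum_ι_mul_ι_tmul_smul {I : Type*} {Γ : Submodule R V} (g : I → Γ)
    (S : Finset I) (T : I → Finset I) (b : I → I → R) (t : Q) :
    ∃ (W : Submodule R V) (hW : W ≤ Γ), Module.finrank R W ≤ 2 * #S ∧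
      ∑ i ∈ S, ∑ j ∈ T i, (ι R (g i) * ι R (g j)) ⊗ₜ[R] (b i j • t) ∈
        LinearMap.range (LinearMap.rTensor Q (map (Submodule.inclusion hW)).toLinearMap) := by
  let f : I → Γ := fun i => ∑ j ∈ T i, b i j • g j
  let v : S ⊕ S → V := Sum.elim (fun i => g i) fun i => f i
  let W := Submodule.span R (Set.range v)
  have hW : W ≤ Γ := by
    rw [Submodule.span_le]
    rintro _ ⟨i | i, rfl⟩ <;> exact SetLike.coe_mem _
  refine ⟨W, hW, ?_, ?_⟩
  · calc Module.finrank R W ≤ Fintype.card (S ⊕ S) := finrank_range_le_card (R := R) v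
      _ = 2 * #S := by simp [two_mul]
  have hsum : ∑ i ∈ S, ∑ j ∈ T i, (ι R (g i) * ι R (g j)) ⊗ₜ[R] (b i j • t) =
      ∑ i ∈ S, (ι R (g i) * ι R (f i)) ⊗ₜ[R] t := by
    simp [f, mul_sum, sum_tmul, smul_tmul]
  rw [hsum]
  refine Submodule.sum_mem _ fun i hi => ⟨(ι R (⟨g i, ?_⟩ : W) * ι R (⟨f i, ?_⟩ : W)) ⊗ₜ t, ?_⟩
  · exact Submodule.subset_span ⟨Sum.inl ⟨i, hi⟩, rfl⟩
  · exact Submodule.subset_span ⟨Sum.inr ⟨i, hi⟩, rfl⟩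
  · simp only [LinearMap.rTensor_tmul, AlgHom.toLinearMap_apply, map_mul, map_apply_ι]
    rfl

end Span

end ExteriorAlgebra

namespace QpZp

variable (p : ℕ) [hp : Fact p.Prime]

noncomputable def invPow (N : ℕ) : QpZp p := Submodule.Quotient.mk ((p : ℚ_[p]) ^ N)⁻¹

variable {p}

theorem invPow_eq_pow_zsmul (N k : ℕ) : invPow p N = ((p : ℤ) ^ k) • invPow p (N + k) := by
  rw [invPow, invPow, ← Submodule.Quotient.mk_smul, zsmul_eq_mul, pow_add]
  push_cast
  field_simp [hp.out.ne_zero]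

theorem monotone_zmultiples_invPow : Monotone fun N => AddSubgroup.zmultiples (invPow p N) := by
  intro N N' h
  obtain ⟨k, rfl⟩ := Nat.exists_eq_add_of_le h
  rw [AddSubgroup.zmultiples_le, invPow_eq_pow_zsmul N k]
  exact zsmul_mem (AddSubgroup.mem_zmultiples _) _

theorem exists_mem_zmultiples_invPow (c : QpZp p) :
    ∃ N, c ∈ AddSubgroup.zmultiples (invPow p N) := by
  obtain ⟨x, rfl⟩ := Submodule.Quotient.mk_surjective _ c
  obtain ⟨N, hN⟩ := pow_unbounded_of_one_lt ‖x‖ (by exact_mod_cast hp.out.one_lt : (1 : ℝ) < p)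
  let y : ℤ_[p] := ⟨p ^ N * x, by
    rw [norm_mul, norm_pow, Padic.norm_p, inv_pow]
    exact inv_mul_le_one_of_le₀ hN.le (by positivity)⟩
  -- `y = p ^ N * x ∈ ℤ_p` is congruent to the integer `y.appr N` modulo `p ^ N`
  obtain ⟨z, hz⟩ := Ideal.mem_span_singleton'.mp (y.appr_spec N)
  refine ⟨N, AddSubgroup.mem_zmultiples_iff.mpr ⟨y.appr N, ?_⟩⟩
  rw [invPow, ← Submodule.Quotient.mk_smul, Submodule.Quotient.eq]
  have hz' := congrArg ((↑) : ℤ_[p] → ℚ_[p]) hz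
  have hy : (y : ℚ_[p]) = p ^ N * x := rfl
  push_cast [hy] at hz'
  have hp0 : (p : ℚ_[p]) ≠ 0 := by exact_mod_cast hp.out.ne_zero
  have key : (y.appr N : ℤ) • ((p : ℚ_[p]) ^ N)⁻¹ - x = -(z : ℚ_[p]) := by
    rw [zsmul_eq_mul]
    field_simp
    push_cast
    linear_combination hz'
  rw [key]
  exact neg_mem (Submodule.subset_span ⟨z, rfl⟩)

theorem exists_forall_mem_zmultiples {κ : Type*} [Finite κ] (a : κ → QpZp p) :
    ∃ t : QpZp p, ∀ k, a k ∈ AddSubgroup.zmultiples t := by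
  choose N hN using fun k => exists_mem_zmultiples_invPow (a k)
  obtain ⟨N₀, hN₀⟩ := Finite.exists_le N
  exact ⟨invPow p N₀, fun k => monotone_zmultiples_invPow (hN₀ k) (hN k)⟩

end QpZp

open ExteriorAlgebra

/-- Let `Γ ⊆ Γ'` with `Γ' = ℤ^r` free with basis `e₁,…,e_r` and `Γ`
spanned by `d₁e₁,…,d_re_r`, where each `d_i` is `±` a power of `p` and `d_i = ±1` for
all `i > n`. Let `ω ∈ ⋀²Γ ⊗ ℚ_p/ℤ_p` whose image in `⋀²Γ' ⊗ ℚ_p/ℤ_p` is zero. Then `ω`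
lies in `⋀²W ⊗ ℚ_p/ℤ_p` for some subgroup `W ⊆ Γ` of rank at most `2n`. -/
theorem stmt_18 (p : ℕ) [Fact p.Prime] (r n : ℕ)
    (e : Module.Basis (Fin r) ℤ (Fin r → ℤ)) (d : Fin r → ℤ)
    (Γ : Submodule ℤ (Fin r → ℤ))
    (hΓ : Γ = Submodule.span ℤ (Set.range fun i : Fin r => d i • e i))
    (hpow : ∀ i : Fin r, ∃ m : ℕ, d i = (p : ℤ) ^ m ∨ d i = -((p : ℤ) ^ m))
    (hone : ∀ i : Fin r, n ≤ (i : ℕ) → d i = 1 ∨ d i = -1)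
    (ω : ExteriorAlgebra ℤ Γ ⊗[ℤ] QpZp p)
    (hdeg2 : ω ∈ Submodule.span ℤ
      {x : ExteriorAlgebra ℤ Γ ⊗[ℤ] QpZp p | ∃ (u v : Γ) (c : QpZp p),
        x = (ExteriorAlgebra.ι ℤ u * ExteriorAlgebra.ι ℤ v) ⊗ₜ[ℤ] c})
    (h0 : LinearMap.rTensor (QpZp p) (ExteriorAlgebra.map Γ.subtype).toLinearMap ω = 0) :
    ∃ (W : Submodule ℤ (Fin r → ℤ)) (hW : W ≤ Γ),
      Module.finrank ℤ ↥W ≤ 2 * n ∧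
      ω ∈ LinearMap.range (LinearMap.rTensor (QpZp p)
        (ExteriorAlgebra.map (Submodule.inclusion hW)).toLinearMap) := by
  have hd : ∀ i, d i ≠ 0 := fun i => by
    obtain ⟨m, hm | hm⟩ := hpow i <;> simp [hm, (Fact.out : p.Prime).ne_zero]
  subst hΓ
  let g := Module.Basis.span (e.linearIndependent.smul_of_ne_zero hd)
  obtain ⟨a, rfl⟩ := exists_eq_sum_Ioi_of_mem_span g hdeg2
  have hg : ∀ i, Submodule.subtype _ (g i) = d i • e i := fun i =>
    congrArg Subtype.val (Module.Basis.span_apply _ i)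
  have hunit : ∀ i : Fin r, n ≤ (i : ℕ) → IsUnit (d i) := fun i hi =>
    Int.isUnit_iff.mpr (hone i hi)
  have hvanish : ∀ i j : Fin r, n ≤ (i : ℕ) → i < j → a i j = 0 := fun i j hi hij =>
    ((hunit i hi).mul (hunit j (hi.trans hij.le))).smul_eq_zero.mp
      (smul_eq_zero_of_rTensor_map_sum_Ioi_eq_zero _ e hg h0 hij)
  obtain ⟨t, ht⟩ := QpZp.exists_forall_mem_zmultiples (Function.uncurry a)
  choose b hb using fun i j => AddSubgroup.mem_zmultiples_iff.mp (ht (i, j))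
  obtain ⟨W, hW, hrank, hmem⟩ :=
    exists_finrank_le_of_sum_ι_mul_ι_tmul_smul g {i | (i : ℕ) < n} Ioi b t
  refine ⟨W, hW, hrank.trans (by simp [Fin.card_filter_val_lt]), ?_⟩
  convert hmem using 1
  rw [sum_filter]
  refine sum_congr rfl fun i _ => ?_
  split_ifs with hi
  · exact sum_congr rfl fun j _ => by rw [hb]; rfl
  · exact sum_eq_zero fun j hj => by rw [hvanish i j (not_lt.mp hi) (mem_Ioi.mp hj), tmul_zero]
end
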